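/- arXiv:2505.19517 — 8 statements merged into one kernel-verified Lean document; each statement's English description precedes it below -/
import Mathlib

section
/- Let G be a Lie group acting smoothly on the right on a smooth manifold M via φ : G × M → M. For each Lie algebra element U, define the fundamental vector field φ♯_U on M by φ♯_U(ξ) = D φ_ξ(I)[U], where φ_ξ(X) = φ(X, ξ). Then the map U ↦ φ♯_U is a Lie algebra homomorphism from the Lie algebra of G to the Lie algebra of smooth vector fields on M: φ♯_{[U,V]} = [φ♯_U, φ♯_V]. -/
/-!
STATEMENT 0: For a smooth right action φ of a Lie group G on a manifold M, the map
U ↦ φ♯_U (fundamental vector field) is a Lie algebra homomorphism from 𝔤 to 𝔛(M).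
The Lie group is modelled as a normed vector space `E` equipped with a smooth group
structure; its Lie algebra is `E` (the tangent space at the identity), with the
bracket induced by the left-invariant vector fields `R♯_U(X) = X·U = D L_X(I)[U]`.
The Lie bracket of vector fields is the standard commutator `VectorField.lieBracket`.
-/

open VectorField

/-- If `V,V'` on `E` are `f`-related to `W,W'` on `F`, the brackets are `f`-related. -/
lemma lieBracket_of_related {E F : Type*} [NormedAddCommGroup E] [NormedSpace ℝ E]
    [NormedAddCommGroup F] [NormedSpace ℝ F]
    {f : E → F} {V V' : E → E} {W W' : F → F} {x : E}
    (hf : ContDiff ℝ 2 f)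
    (hV : DifferentiableAt ℝ V x) (hV' : DifferentiableAt ℝ V' x)
    (hW : DifferentiableAt ℝ W (f x)) (hW' : DifferentiableAt ℝ W' (f x))
    (hrel : ∀ y, W (f y) = fderiv ℝ f y (V y))
    (hrel' : ∀ y, W' (f y) = fderiv ℝ f y (V' y)) :
    lieBracket ℝ W W' (f x) = fderiv ℝ f x (lieBracket ℝ V V' x) := by
  have hfd : Differentiable ℝ f := hf.differentiable (by norm_num)
  have hdf : DifferentiableAt ℝ (fderiv ℝ f) x :=
    (hf.fderiv_right (m := 1) (by norm_num)).differentiable one_ne_zero x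
  have key : ∀ (W₀ : F → F) (V₀ : E → E), DifferentiableAt ℝ W₀ (f x) →
      DifferentiableAt ℝ V₀ x → (∀ y, W₀ (f y) = fderiv ℝ f y (V₀ y)) → ∀ v,
      fderiv ℝ W₀ (f x) (fderiv ℝ f x v)
        = fderiv ℝ (fderiv ℝ f) x v (V₀ x) + fderiv ℝ f x (fderiv ℝ V₀ x v) := by
    intro W₀ V₀ hW₀ hV₀ hrel₀ v
    have h1 : fderiv ℝ (W₀ ∘ f) x = (fderiv ℝ W₀ (f x)).comp (fderiv ℝ f x) :=
      fderiv_comp x hW₀ (hfd x)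
    have h2 : (W₀ ∘ f) = fun y => fderiv ℝ f y (V₀ y) := funext fun y => hrel₀ y
    calc fderiv ℝ W₀ (f x) (fderiv ℝ f x v)
        = fderiv ℝ (W₀ ∘ f) x v := by rw [h1]; rfl
      _ = fderiv ℝ (fun y => fderiv ℝ f y (V₀ y)) x v := by rw [h2]
      _ = _ := by rw [fderiv_clm_apply hdf hV₀]; simp [add_comm]
  have symm := ((hf.contDiffAt (x := x)).isSymmSndFDerivAt (by simp [minSmoothness])).eq (V x) (V' x)
  have e1 := key W' V' hW' hV' hrel' (V x)
  have e2 := key W V hW hV hrel (V' x)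
  calc lieBracket ℝ W W' (f x)
      = fderiv ℝ W' (f x) (W (f x)) - fderiv ℝ W (f x) (W' (f x)) := rfl
    _ = fderiv ℝ W' (f x) (fderiv ℝ f x (V x))
          - fderiv ℝ W (f x) (fderiv ℝ f x (V' x)) := by rw [hrel x, hrel' x]
    _ = fderiv ℝ f x (fderiv ℝ V' x (V x)) - fderiv ℝ f x (fderiv ℝ V x (V' x)) := by
        rw [e1, e2, symm]; abel
    _ = _ := by rw [lieBracket, map_sub]


theorem fundamental_vector_fields_lie_algebra_hom
    {E F : Type*} [NormedAddCommGroup E] [NormedSpace ℝ E]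
    [NormedAddCommGroup F] [NormedSpace ℝ F]
    -- smooth group structure on E (the Lie group G)
    (mul : E → E → E) (one : E) (inv : E → E)
    (hmul_smooth : ContDiff ℝ (⊤ : ℕ∞) (fun p : E × E => mul p.1 p.2))
    (hinv_smooth : ContDiff ℝ (⊤ : ℕ∞) inv)
    (hassoc : ∀ X Y Z, mul (mul X Y) Z = mul X (mul Y Z))
    (hone_mul : ∀ X, mul one X = X) (hmul_one : ∀ X, mul X one = X)
    (hinv_mul : ∀ X, mul (inv X) X = one) (hmul_inv : ∀ X, mul X (inv X) = one)
    -- smooth right action φ : G × M → M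
    (φ : E → F → F)
    (hφ_smooth : ContDiff ℝ (⊤ : ℕ∞) (fun p : E × F => φ p.1 p.2))
    (hφ_one : ∀ ξ, φ one ξ = ξ)
    (hφ_mul : ∀ X Y ξ, φ Y (φ X ξ) = φ (mul X Y) ξ)
    -- left-invariant vector fields R♯_U(X) = D L_X(I)[U] and the Lie algebra bracket on 𝔤 = T_I G
    (Rsharp : E → E → E)
    (hRsharp : ∀ U X, Rsharp U X = fderiv ℝ (fun Z => mul X Z) one U)
    (bracket : E → E → E)
    (hbracket : ∀ U V, bracket U V = lieBracket ℝ (Rsharp U) (Rsharp V) one)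
    -- fundamental vector fields φ♯_U(ξ) = D φ_ξ(I)[U]
    (sharp : E → F → F)
    (hsharp : ∀ U ξ, sharp U ξ = fderiv ℝ (fun X => φ X ξ) one U) :
    -- U ↦ φ♯_U is a Lie algebra homomorphism: φ♯_{[U,V]} = [φ♯_U, φ♯_V]
    ∀ U V : E, sharp (bracket U V) = lieBracket ℝ (sharp U) (sharp V) := by
  intro U V
  funext ξ
  -- the orbit map f = Φ_ξ
  set f : E → F := fun X => φ X ξ with hf_def
  have hf_smooth : ContDiff ℝ (⊤ : ℕ∞) f :=
    hφ_smooth.comp ((contDiff_id (E := E)).prodMk contDiff_const)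
  have hf2 : ContDiff ℝ 2 f := hf_smooth.of_le (WithTop.coe_le_coe.mpr le_top)
  -- smoothness of Rsharp U
  have hR_eq : ∀ U₀ : E, Rsharp U₀ = fun X => fderiv ℝ (fun Z => mul X Z) one U₀ :=
    fun U₀ => funext (hRsharp U₀)
  have hR_diff : ∀ U₀ : E, Differentiable ℝ (Rsharp U₀) := by
    intro U₀
    rw [hR_eq U₀]
    exact (hmul_smooth.fderiv_apply (n := 1) (g := fun _ : E => one) (k := fun _ : E => U₀)
      contDiff_const contDiff_const (WithTop.coe_le_coe.mpr le_top)).differentiable one_ne_zero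
  -- smoothness of sharp U
  have hs_eq : ∀ U₀ : E, sharp U₀ = fun η => fderiv ℝ (fun X => φ X η) one U₀ :=
    fun U₀ => funext (hsharp U₀)
  have hs_diff : ∀ U₀ : E, Differentiable ℝ (sharp U₀) := by
    intro U₀
    rw [hs_eq U₀]
    have hunc : ContDiff ℝ (⊤ : ℕ∞) (Function.uncurry fun (η : F) (X : E) => φ X η) :=
      hφ_smooth.comp (contDiff_snd.prodMk contDiff_fst)
    exact (hunc.fderiv_apply (n := 1) (g := fun _ : F => one) (k := fun _ : F => U₀)
      contDiff_const contDiff_const (WithTop.coe_le_coe.mpr le_top)).differentiable one_ne_zero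
  -- relatedness: sharp U₀ (f X) = D f (X) (Rsharp U₀ X)
  have hrel : ∀ (U₀ : E) (X : E), sharp U₀ (f X) = fderiv ℝ f X (Rsharp U₀ X) := by
    intro U₀ X
    have hLX : ContDiff ℝ (⊤ : ℕ∞) (fun Z => mul X Z) :=
      hmul_smooth.comp (contDiff_const.prodMk contDiff_id)
    have hcomp : (fun Y => φ Y (f X)) = f ∘ (fun Z => mul X Z) := by
      funext Y
      simp only [hf_def, Function.comp_apply, hφ_mul]
    have hchain : fderiv ℝ (fun Y => φ Y (f X)) one
        = (fderiv ℝ f (mul X one)).comp (fderiv ℝ (fun Z => mul X Z) one) := by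
      rw [hcomp]
      exact fderiv_comp one (hf2.differentiable (by norm_num) (mul X one))
        (hLX.differentiable (by simp) one)
    rw [hsharp U₀ (f X), hchain, hmul_one X]
    simp only [ContinuousLinearMap.comp_apply]
    rw [hRsharp U₀ X]
  -- apply the pushforward-of-bracket lemma at x = one
  have main := lieBracket_of_related (x := one) hf2
    ((hR_diff U) one) ((hR_diff V) one)
    ((hs_diff U) (f one)) ((hs_diff V) (f one))
    (hrel U) (hrel V)
  have hfone : f one = ξ := hφ_one ξ
  rw [hfone] at main
  rw [hsharp (bracket U V) ξ, hbracket U V, ← main]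
end

section
/- Suppose f† : V → 𝔛(G) contains a synchronous model of f : V → 𝔛(M) with respect to an error function e : G × M → M, meaning that for all inputs v, d/dt e(X̂(t), ξ(t)) = 0 along solutions X̂ of f† and ξ of f driven by the same input. Then for any fixed point ξ̄ ∈ M, f† contains an internal model of f with reconstruction map φ(X̂) := e_{X̂}⁻¹(ξ̄); that is, for every solution X̂(t) of f† with ξ₀ := φ(X̂₀), the curve ξ(t) := φ(X̂(t)) is the solution of f with initial condition ξ₀. -/
/-!
STATEMENT 2: If f† contains a synchronous model of f w.r.t. an error function e
(i.e. d/dt e(X̂(t), ξ(t)) = 0 along all pairs of solutions driven by the same input),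
then for any fixed ξ̄ ∈ M, f† contains an internal model of f with reconstruction
map φ(X̂) := e_{X̂}⁻¹(ξ̄): for every solution X̂(t) of f† and the solution ξ(t) of f
with initial condition ξ₀ := φ(X̂₀), one has ξ(t) = φ(X̂(t)) for all t.
Manifolds M and G are modelled as normed vector spaces `F` and `E`; `einv X` denotes
the inverse of the diffeomorphism `e_X : M → M`.
-/

theorem synchronous_model_implies_internal_model
    {V E F : Type*} [NormedAddCommGroup V] [NormedSpace ℝ V] [FiniteDimensional ℝ V]
    [NormedAddCommGroup E] [NormedSpace ℝ E]
    [NormedAddCommGroup F] [NormedSpace ℝ F]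
    -- the error function e : G × M → M and the inverses einv X = (e_X)⁻¹
    (e : E → F → F) (einv : E → F → F)
    (he_smooth : ContDiff ℝ (⊤ : ℕ∞) (fun p : E × F => e p.1 p.2))
    (heinv_smooth : ContDiff ℝ (⊤ : ℕ∞) (fun p : E × F => einv p.1 p.2))
    (he_left : ∀ X, Function.LeftInverse (einv X) (e X))
    (he_right : ∀ X, Function.RightInverse (einv X) (e X))
    (he_submersion : ∀ ξbar : F, Function.Surjective (fun X => einv X ξbar) ∧
      ∀ X : E, Function.Surjective (fderiv ℝ (fun X' => einv X' ξbar) X))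
    -- the two systems f : V → 𝔛(M) and f† : V → 𝔛(G)
    (f : V → F → F) (fdag : V → E → E)
    -- f† contains a synchronous model of f: for every input signal v(t) and every
    -- pair of solutions X̂(t), ξ(t) driven by it, d/dt e(X̂(t), ξ(t)) = 0
    (hsync : ∀ (v : ℝ → V) (Xhat : ℝ → E) (ξ : ℝ → F),
      (∀ t, HasDerivAt Xhat (fdag (v t) (Xhat t)) t) →
      (∀ t, HasDerivAt ξ (f (v t) (ξ t)) t) →
      ∀ t, HasDerivAt (fun s => e (Xhat s) (ξ s)) 0 t)
    -- a fixed point ξ̄ ∈ M, defining the reconstruction map φ(X̂) = e_{X̂}⁻¹(ξ̄)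
    (ξbar : F)
    -- an input signal v(t), a solution X̂(t) of f†, and the solution ξ(t) of f
    -- with initial condition ξ₀ = φ(X̂₀)
    (v : ℝ → V) (Xhat : ℝ → E) (ξ : ℝ → F)
    (hXhat : ∀ t, HasDerivAt Xhat (fdag (v t) (Xhat t)) t)
    (hξ : ∀ t, HasDerivAt ξ (f (v t) (ξ t)) t)
    (hξ0 : ξ 0 = einv (Xhat 0) ξbar) :
    -- the reconstructed curve φ(X̂(t)) coincides with the solution ξ(t)
    ∀ t, ξ t = einv (Xhat t) ξbar := by
  have hd := hsync v Xhat ξ hXhat hξ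
  have hconst : ∀ t, e (Xhat t) (ξ t) = e (Xhat 0) (ξ 0) := by
    intro t
    exact is_const_of_deriv_eq_zero (fun s => (hd s).differentiableAt)
      (fun s => (hd s).deriv) t 0
  intro t
  have h1 : e (Xhat t) (ξ t) = ξbar := by
    rw [hconst t, hξ0, he_right (Xhat 0) ξbar]
  calc ξ t = einv (Xhat t) (e (Xhat t) (ξ t)) := (he_left (Xhat t) (ξ t)).symm
    _ = einv (Xhat t) ξbar := by rw [h1]
end

section
/- Let f† : V → 𝔛(G) be a synchronous lift of f : V → 𝔛(M) with respect to an error function e, i.e. D_X e(X, ξ)[f†_v(X)] = −D_ξ e(X, ξ)[f_v(ξ)] for all v, X, ξ. Then f† is a lift of f in the classical sense: for the reconstruction map φ(X) := e_X⁻¹(ξ̄) determined by any fixed ξ̄ ∈ M, one has D φ(X)[f†_v(X)] = f_v(φ(X)) for all v ∈ V and X ∈ G. -/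
/-!
STATEMENT 3: A synchronous lift f† of f (w.r.t. an error function e) is a lift in the
classical sense: for the reconstruction map φ(X) := e_X⁻¹(ξ̄) determined by any fixed
ξ̄ ∈ M, D φ(X)[f†_v(X)] = f_v(φ(X)) for all v and X.
Manifolds M, G are modelled as normed vector spaces `F`, `E`; `einv X = (e_X)⁻¹`.
-/

theorem synchronous_lift_is_classical_lift
    {V E F : Type*} [NormedAddCommGroup V] [NormedSpace ℝ V] [FiniteDimensional ℝ V]
    [NormedAddCommGroup E] [NormedSpace ℝ E]
    [NormedAddCommGroup F] [NormedSpace ℝ F]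
    -- the error function e : G × M → M and the inverses einv X = (e_X)⁻¹
    (e : E → F → F) (einv : E → F → F)
    (he_smooth : ContDiff ℝ (⊤ : ℕ∞) (fun p : E × F => e p.1 p.2))
    (heinv_smooth : ContDiff ℝ (⊤ : ℕ∞) (fun p : E × F => einv p.1 p.2))
    (he_left : ∀ X, Function.LeftInverse (einv X) (e X))
    (he_right : ∀ X, Function.RightInverse (einv X) (e X))
    (he_submersion : ∀ ξbar : F, Function.Surjective (fun X => einv X ξbar) ∧
      ∀ X : E, Function.Surjective (fderiv ℝ (fun X' => einv X' ξbar) X))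
    -- the two systems f : V → 𝔛(M) and f† : V → 𝔛(G)
    (f : V → F → F) (fdag : V → E → E)
    -- f† is a synchronous lift of f:
    -- D_X e(X, ξ)[f†_v(X)] = − D_ξ e(X, ξ)[f_v(ξ)] for all v, X, ξ
    (hsync : ∀ (vv : V) (X : E) (ξ : F),
      fderiv ℝ (fun X' => e X' ξ) X (fdag vv X) =
        - fderiv ℝ (fun ξ' => e X ξ') ξ (f vv ξ))
    -- a fixed point ξ̄ ∈ M, defining the reconstruction map φ(X) = e_X⁻¹(ξ̄)
    (ξbar : F) :
    -- f† is a classical lift of f: D φ(X)[f†_v(X)] = f_v(φ(X))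
    ∀ (vv : V) (X : E),
      fderiv ℝ (fun X' => einv X' ξbar) X (fdag vv X) = f vv (einv X ξbar) := by
  intro vv X
  have heD : Differentiable ℝ (fun p : E × F => e p.1 p.2) :=
    he_smooth.differentiable (by simp)
  have heinvD : Differentiable ℝ (fun p : E × F => einv p.1 p.2) :=
    heinv_smooth.differentiable (by simp)
  set φ : E → F := fun X' => einv X' ξbar with hφdef
  -- φ is differentiable
  have hφ : HasFDerivAt φ (fderiv ℝ φ X) X := by
    have : DifferentiableAt ℝ φ X :=
      ((heinvD (X, ξbar)).comp X (differentiableAt_id.prodMk (differentiableAt_const _)) :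
        DifferentiableAt ℝ ((fun p : E × F => einv p.1 p.2) ∘ fun X' => (X', ξbar)) X)
    exact this.hasFDerivAt
  set Dφ := fderiv ℝ φ X with hDφ
  set De := fderiv ℝ (fun p : E × F => e p.1 p.2) (X, φ X) with hDe
  -- partial derivative in X
  have h1 : HasFDerivAt (fun X' => e X' (φ X))
      (De.comp ((ContinuousLinearMap.id ℝ E).prod 0)) X :=
    ((heD (X, φ X)).hasFDerivAt.comp X ((hasFDerivAt_id X).prodMk (hasFDerivAt_const _ _)) :
      HasFDerivAt ((fun p : E × F => e p.1 p.2) ∘ fun X' => (id X', φ X)) _ X)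
  -- partial derivative in ξ
  have h2 : HasFDerivAt (fun ξ' => e X ξ')
      (De.comp ((0 : F →L[ℝ] E).prod (ContinuousLinearMap.id ℝ F))) (φ X) :=
    ((heD (X, φ X)).hasFDerivAt.comp (φ X)
      ((hasFDerivAt_const _ _).prodMk (hasFDerivAt_id _)) :
      HasFDerivAt ((fun p : E × F => e p.1 p.2) ∘ fun ξ' => (X, id ξ')) _ (φ X))
  -- total derivative of the constant map X' ↦ e X' (φ X')
  have hg : HasFDerivAt (fun X' => e X' (φ X'))
      (De.comp ((ContinuousLinearMap.id ℝ E).prod Dφ)) X :=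
    ((heD (X, φ X)).hasFDerivAt.comp X ((hasFDerivAt_id X).prodMk hφ) :
      HasFDerivAt ((fun p : E × F => e p.1 p.2) ∘ fun X' => (id X', φ X')) _ X)
  have hgconst : (fun X' : E => e X' (φ X')) = fun _ => ξbar :=
    funext fun X' => he_right X' ξbar
  have hzero : De.comp ((ContinuousLinearMap.id ℝ E).prod Dφ) = 0 := by
    rw [hgconst] at hg
    exact hg.unique (hasFDerivAt_const _ _)
  -- evaluate at w := fdag vv X
  set w := fdag vv X with hw
  have hsum : De (w, Dφ w) = 0 := by
    have := congrFun (congrArg (fun (L : E →L[ℝ] F) => (L : E → F)) hzero) w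
    simpa using this
  have hsplit : De (w, Dφ w) = De (w, 0) + De (0, Dφ w) := by
    rw [← map_add]
    norm_num
  -- rewrite using partial derivatives and the synchrony hypothesis
  have hpart1 : fderiv ℝ (fun X' => e X' (φ X)) X w = De (w, 0) := by
    rw [h1.fderiv]; simp
  have hpart2 : ∀ u, fderiv ℝ (fun ξ' => e X ξ') (φ X) u = De (0, u) := by
    intro u; rw [h2.fderiv]; simp
  have hkey : De (0, Dφ w) = De (0, f vv (φ X)) := by
    have hs := hsync vv X (φ X)
    rw [hpart1, hpart2] at hs
    have : De (w, 0) + De (0, Dφ w) = 0 := by rw [← hsplit]; exact hsum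
    rw [hs] at this
    have h := neg_add_eq_zero.mp this
    exact h.symm
  -- injectivity of the partial derivative D_ξ e(X, ·) at φ X
  have heq : e X (φ X) = ξbar := he_right X ξbar
  have hB : HasFDerivAt (fun ξ' => einv X ξ')
      (fderiv ℝ (fun ξ' => einv X ξ') ξbar) ξbar := by
    have : DifferentiableAt ℝ (fun ξ' => einv X ξ') ξbar :=
      ((heinvD (X, ξbar)).comp ξbar ((differentiableAt_const _).prodMk differentiableAt_id) :
        DifferentiableAt ℝ ((fun p : E × F => einv p.1 p.2) ∘ fun ξ' => (X, ξ')) ξbar)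
    exact this.hasFDerivAt
  set B := fderiv ℝ (fun ξ' => einv X ξ') ξbar with hBdef
  have hB' : HasFDerivAt (fun ξ' => einv X ξ') B (e X (φ X)) := by rw [heq]; exact hB
  have hcomp : HasFDerivAt (fun ξ' => einv X (e X ξ'))
      (B.comp (De.comp ((0 : F →L[ℝ] E).prod (ContinuousLinearMap.id ℝ F)))) (φ X) :=
    hB'.comp (φ X) h2
  have hid : (fun ξ' => einv X (e X ξ')) = fun ξ' => ξ' :=
    funext fun ξ' => he_left X ξ'
  have hcompid : B.comp (De.comp ((0 : F →L[ℝ] E).prod (ContinuousLinearMap.id ℝ F)))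
      = ContinuousLinearMap.id ℝ F := by
    rw [hid] at hcomp
    exact hcomp.unique (hasFDerivAt_id _)
  have hBA : ∀ u : F, B (De (0, u)) = u := by
    intro u
    have := congrFun (congrArg (fun (L : F →L[ℝ] F) => (L : F → F)) hcompid) u
    simpa using this
  calc Dφ w = B (De (0, Dφ w)) := (hBA _).symm
    _ = B (De (0, f vv (φ X))) := by rw [hkey]
    _ = f vv (φ X) := hBA _
end

section
/- Let f† be a synchronous lift of f with respect to error e. Suppose g ∈ 𝔛(M) admits a synchronous lift g† ∈ 𝔛(G), and g† is complete. Then g is complete: its flow exists for all time at every point of M. Moreover, the flow of g is given by 𝔉_g^t(ξ) = e_{γ†(t)}⁻¹(e(I, ξ)), where γ†(t) is the integral curve of g† with γ†(0) = I for any fixed I ∈ G. -/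
/-!
STATEMENT 5: If g ∈ 𝔛(M) admits a synchronous lift g† ∈ 𝔛(G) (w.r.t. an error
function e) and g† is complete, then g is complete, and its flow is given by
𝔉_g^t(ξ) = e_{γ†(t)}⁻¹(e(I, ξ)), where γ† is the integral curve of g† through a
fixed I ∈ G. Manifolds M, G are modelled as normed vector spaces `F`, `E`;
`einv X = (e_X)⁻¹`; completeness of g† is expressed by a globally-defined flow.
-/

theorem synchronous_lift_completeness
    {E F : Type*} [NormedAddCommGroup E] [NormedSpace ℝ E]
    [NormedAddCommGroup F] [NormedSpace ℝ F]
    -- the error function e : G × M → M and the inverses einv X = (e_X)⁻¹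
    (e : E → F → F) (einv : E → F → F)
    (he_smooth : ContDiff ℝ (⊤ : ℕ∞) (fun p : E × F => e p.1 p.2))
    (heinv_smooth : ContDiff ℝ (⊤ : ℕ∞) (fun p : E × F => einv p.1 p.2))
    (he_left : ∀ X, Function.LeftInverse (einv X) (e X))
    (he_right : ∀ X, Function.RightInverse (einv X) (e X))
    (he_submersion : ∀ ξbar : F, Function.Surjective (fun X => einv X ξbar) ∧
      ∀ X : E, Function.Surjective (fderiv ℝ (fun X' => einv X' ξbar) X))
    -- smooth vector fields g on M and g† on G, with g† a synchronous lift of g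
    (g : F → F) (gdag : E → E)
    (hg : ContDiff ℝ (⊤ : ℕ∞) g) (hgdag : ContDiff ℝ (⊤ : ℕ∞) gdag)
    (hsync : ∀ (X : E) (ξ : F),
      fderiv ℝ (fun X' => e X' ξ) X (gdag X) =
        - fderiv ℝ (fun ξ' => e X ξ') ξ (g ξ))
    -- g† is complete: its integral curve γ† through any fixed I ∈ G exists for all time
    (I : E) (γdag : ℝ → E)
    (hγdag0 : γdag 0 = I)
    (hγdag : ∀ t : ℝ, HasDerivAt γdag (gdag (γdag t)) t) :
    -- g is complete, with flow 𝔉_g^t(ξ) = e_{γ†(t)}⁻¹(e(I, ξ)) defined for all time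
    ∀ ξ : F, einv (γdag 0) (e I ξ) = ξ ∧
      ∀ t : ℝ, HasDerivAt (fun s => einv (γdag s) (e I ξ))
        (g (einv (γdag t) (e I ξ))) t := by
  intro ξ
  set η := e I ξ with hη
  refine ⟨by rw [hγdag0]; exact he_left I ξ, ?_⟩
  intro t
  set X := γdag t with hX
  set c : ℝ → F := fun s => einv (γdag s) η with hc
  set ct := einv X η with hctdef
  -- derivative of c
  have hdi : HasFDerivAt (fun p : E × F => einv p.1 p.2)
      (fderiv ℝ (fun p : E × F => einv p.1 p.2) (X, η)) (X, η) :=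
    ((heinv_smooth.differentiable (by simp)) (X, η)).hasFDerivAt
  have hpair : HasDerivAt (fun s => (γdag s, η)) (gdag X, (0 : F)) t :=
    (hγdag t).prodMk (hasDerivAt_const t η)
  have hcderiv : HasDerivAt c
      (fderiv ℝ (fun p : E × F => einv p.1 p.2) (X, η) (gdag X, 0)) t :=
    hdi.comp_hasDerivAt (x := t) (f := fun s => (γdag s, η)) hpair
  set v := fderiv ℝ (fun p : E × F => einv p.1 p.2) (X, η) (gdag X, 0) with hv
  -- full derivative of e at (X, ct)
  have hDe : HasFDerivAt (fun p : E × F => e p.1 p.2)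
      (fderiv ℝ (fun p : E × F => e p.1 p.2) (X, ct)) (X, ct) :=
    ((he_smooth.differentiable (by simp)) (X, ct)).hasFDerivAt
  set De := fderiv ℝ (fun p : E × F => e p.1 p.2) (X, ct) with hDedef
  -- partial derivatives of e
  have hP1 : HasFDerivAt (fun X' => e X' ct)
      (De.comp (ContinuousLinearMap.inl ℝ E F)) X :=
    hDe.comp (f := fun X' : E => (X', ct)) X (hasFDerivAt_prodMk_left X ct)
  have hP2 : HasFDerivAt (fun ξ' => e X ξ')
      (De.comp (ContinuousLinearMap.inr ℝ E F)) ct :=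
    hDe.comp (f := fun ξ' : F => (X, ξ')) ct (hasFDerivAt_prodMk_right X ct)
  -- e (γdag s) (c s) is constant η
  have hconstfun : (fun s => e (γdag s) (c s)) = fun _ => η := by
    funext s; exact he_right (γdag s) η
  have hconst : HasDerivAt (fun s => e (γdag s) (c s)) 0 t := by
    rw [hconstfun]; exact hasDerivAt_const t η
  have hchain : HasDerivAt (fun s => e (γdag s) (c s)) (De (gdag X, v)) t :=
    hDe.comp_hasDerivAt (x := t) (f := fun s => (γdag s, c s)) ((hγdag t).prodMk hcderiv)
  have hzero : De (gdag X, v) = 0 := hchain.unique hconst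
  -- split the full derivative into partials
  have hsplit : De (gdag X, v) = De (gdag X, 0) + De (0, v) := by
    rw [← map_add]; congr 1 <;> simp
  -- synchronicity
  have hsy := hsync X ct
  rw [hP1.fderiv, hP2.fderiv] at hsy
  simp only [ContinuousLinearMap.comp_apply, ContinuousLinearMap.inl_apply,
    ContinuousLinearMap.inr_apply] at hsy
  have hkey : De (0, v) = De (0, g ct) := by
    have h1 : De (gdag X, 0) + De (0, v) = 0 := by rw [← hsplit]; exact hzero
    rw [hsy] at h1
    exact (neg_add_eq_zero.mp h1).symm
  -- injectivity of the partial derivative of e in ξ, via the left inverse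
  have heXct : e X ct = η := he_right X η
  set Q := (fderiv ℝ (fun p : E × F => einv p.1 p.2) (X, η)).comp
      (ContinuousLinearMap.inr ℝ E F) with hQdef
  have hQ : HasFDerivAt (fun η' => einv X η') Q η :=
    hdi.comp (f := fun η' : F => (X, η')) η (hasFDerivAt_prodMk_right X η)
  have hQ' : HasFDerivAt (fun η' => einv X η') Q (e X ct) := by
    rw [heXct]; exact hQ
  have hfuneq : (fun ξ' => einv X (e X ξ')) = fun ξ' : F => ξ' :=
    funext (he_left X)
  have hcompid : HasFDerivAt (fun ξ' : F => ξ')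
      (Q.comp (De.comp (ContinuousLinearMap.inr ℝ E F))) ct := by
    rw [← hfuneq]; exact hQ'.comp ct hP2
  have hQP : Q.comp (De.comp (ContinuousLinearMap.inr ℝ E F)) =
      ContinuousLinearMap.id ℝ F := hcompid.unique (hasFDerivAt_id ct)
  have hvg : v = g ct := by
    have h1 := congrFun (congrArg DFunLike.coe hQP) v
    have h2 := congrFun (congrArg DFunLike.coe hQP) (g ct)
    simp only [ContinuousLinearMap.comp_apply, ContinuousLinearMap.inr_apply,
      ContinuousLinearMap.id_apply] at h1 h2
    calc v = Q (De (0, v)) := h1.symm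
      _ = Q (De (0, g ct)) := by rw [hkey]
      _ = g ct := h2
  exact hvg ▸ hcderiv
end

section
/- Let G be a Lie group acting transitively on the right on M via φ, let Λ : V → 𝔤 be an affine map, and define the fundamental system f_v := φ♯_{Λ(v)} on M and the left-invariant lifted system f†_v(X̂) := X̂·Λ(v) on G. Then f† is a synchronous lift of f for the error e(X̂, ξ) := φ(X̂⁻¹, ξ): for all v ∈ V, X̂ ∈ G, ξ ∈ M, D_{X̂} e(X̂, ξ)[X̂·Λ(v)] = −D_ξ e(X̂, ξ)[φ♯_{Λ(v)}(ξ)]. -/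
/-!
STATEMENT 6: For a transitive right action φ of a Lie group G on M, an affine map
Λ : V → 𝔤, the fundamental system f_v := φ♯_{Λ(v)} and the left-invariant lifted
system f†_v(X̂) := X̂·Λ(v), the lift f† is a synchronous lift of f for the error
e(X̂, ξ) := φ(X̂⁻¹, ξ):
  D_{X̂} e(X̂, ξ)[X̂·Λ(v)] = −D_ξ e(X̂, ξ)[φ♯_{Λ(v)}(ξ)].
The Lie group is modelled as a normed vector space `E` with a smooth group
structure; 𝔤 = T_I G ≅ E; X̂·U := D L_{X̂}(I)[U]; φ♯_U(ξ) := D φ_ξ(I)[U].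
-/

theorem fundamental_lift_is_synchronous
    {V E F : Type*} [NormedAddCommGroup V] [NormedSpace ℝ V] [FiniteDimensional ℝ V]
    [NormedAddCommGroup E] [NormedSpace ℝ E]
    [NormedAddCommGroup F] [NormedSpace ℝ F]
    -- smooth group structure on E (the Lie group G)
    (mul : E → E → E) (one : E) (inv : E → E)
    (hmul_smooth : ContDiff ℝ (⊤ : ℕ∞) (fun p : E × E => mul p.1 p.2))
    (hinv_smooth : ContDiff ℝ (⊤ : ℕ∞) inv)
    (hassoc : ∀ X Y Z, mul (mul X Y) Z = mul X (mul Y Z))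
    (hone_mul : ∀ X, mul one X = X) (hmul_one : ∀ X, mul X one = X)
    (hinv_mul : ∀ X, mul (inv X) X = one) (hmul_inv : ∀ X, mul X (inv X) = one)
    -- smooth right action φ : G × M → M
    (φ : E → F → F)
    (hφ_smooth : ContDiff ℝ (⊤ : ℕ∞) (fun p : E × F => φ p.1 p.2))
    (hφ_one : ∀ ξ, φ one ξ = ξ)
    (hφ_mul : ∀ X Y ξ, φ Y (φ X ξ) = φ (mul X Y) ξ)
    -- the action is transitive: each φ_ξ : G → M is a surjective submersion
    (htransitive : ∀ ξ : F, Function.Surjective (fun X => φ X ξ) ∧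
      ∀ X : E, Function.Surjective (fderiv ℝ (fun X' => φ X' ξ) X))
    -- the affine input map Λ : V → 𝔤
    (Λ : V →ᵃ[ℝ] E)
    -- fundamental vector fields φ♯_U(ξ) = D φ_ξ(I)[U]
    (sharp : E → F → F)
    (hsharp : ∀ U ξ, sharp U ξ = fderiv ℝ (fun X => φ X ξ) one U)
    -- left translation X̂·U = D L_{X̂}(I)[U]
    (leftTrans : E → E → E)
    (hleftTrans : ∀ X U, leftTrans X U = fderiv ℝ (fun Z => mul X Z) one U)
    -- the error function e(X̂, ξ) = φ(X̂⁻¹, ξ)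
    (e : E → F → F) (he : ∀ X ξ, e X ξ = φ (inv X) ξ) :
    -- f†_v(X̂) = X̂·Λ(v) is a synchronous lift of f_v = φ♯_{Λ(v)} for the error e
    ∀ (v : V) (Xhat : E) (ξ : F),
      fderiv ℝ (fun X' => e X' ξ) Xhat (leftTrans Xhat (Λ v)) =
        - fderiv ℝ (fun ξ' => e Xhat ξ') ξ (sharp (Λ v) ξ) := by

  intro v Xhat ξ
  set U := Λ v with hU
  have hφd : Differentiable ℝ (fun p : E × F => φ p.1 p.2) := hφ_smooth.differentiable (by simp)
  have hmd : Differentiable ℝ (fun p : E × E => mul p.1 p.2) := hmul_smooth.differentiable (by simp)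
  have hinvd : Differentiable ℝ inv := hinv_smooth.differentiable (by simp)
  have hinv_one : inv one = one := by
    have h := hmul_inv one
    rwa [hone_mul] at h
  -- inverse of a product
  have hinv_unique : ∀ a b : E, mul a b = one → inv a = b := by
    intro a b hab
    calc inv a = mul (inv a) one := (hmul_one _).symm
      _ = mul (inv a) (mul a b) := by rw [hab]
      _ = mul (mul (inv a) a) b := (hassoc _ _ _).symm
      _ = mul one b := by rw [hinv_mul]
      _ = b := hone_mul _
  have hinv_mul' : ∀ a b : E, inv (mul a b) = mul (inv b) (inv a) := by
    intro a b
    apply hinv_unique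
    calc mul (mul a b) (mul (inv b) (inv a))
        = mul a (mul b (mul (inv b) (inv a))) := hassoc _ _ _
      _ = mul a (mul (mul b (inv b)) (inv a)) := by rw [hassoc]
      _ = mul a (mul one (inv a)) := by rw [hmul_inv]
      _ = mul a (inv a) := by rw [hone_mul]
      _ = one := hmul_inv _
  -- derivative of mul at (one, one)
  set Dmul := fderiv ℝ (fun p : E × E => mul p.1 p.2) (one, one) with hDmulDef
  have hmulF : HasFDerivAt (fun p : E × E => mul p.1 p.2) Dmul (one, one) :=
    (hmd (one, one)).hasFDerivAt
  have hfst : ∀ W : E, Dmul (W, 0) = W := by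
    intro W
    have hprodf : HasFDerivAt (fun X : E => (X, one))
        ((ContinuousLinearMap.id ℝ E).prod (0 : E →L[ℝ] E)) one :=
      HasFDerivAt.prodMk (hasFDerivAt_id one) (hasFDerivAt_const one one)
    have h1 : HasFDerivAt ((fun p : E × E => mul p.1 p.2) ∘ (fun X : E => (X, one)))
        (Dmul.comp ((ContinuousLinearMap.id ℝ E).prod (0 : E →L[ℝ] E))) one :=
      HasFDerivAt.comp one hmulF hprodf
    have h2 : HasFDerivAt (fun X : E => mul X one) (ContinuousLinearMap.id ℝ E) one := by
      have heq : (fun X : E => mul X one) = fun X => X := funext hmul_one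
      rw [heq]; exact hasFDerivAt_id one
    have h3 := h1.unique h2
    have h4 : (Dmul.comp ((ContinuousLinearMap.id ℝ E).prod
        ((0 : E →L[ℝ] E)))) W = (ContinuousLinearMap.id ℝ E) W := by rw [h3]
    simpa using h4
  have hsnd : ∀ W : E, Dmul (0, W) = W := by
    intro W
    have hprodf : HasFDerivAt (fun X : E => (one, X))
        (((0 : E →L[ℝ] E)).prod (ContinuousLinearMap.id ℝ E)) one :=
      HasFDerivAt.prodMk (hasFDerivAt_const one one) (hasFDerivAt_id one)
    have h1 : HasFDerivAt ((fun p : E × E => mul p.1 p.2) ∘ (fun X : E => (one, X)))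
        (Dmul.comp (((0 : E →L[ℝ] E)).prod (ContinuousLinearMap.id ℝ E))) one :=
      HasFDerivAt.comp one hmulF hprodf
    have h2 : HasFDerivAt (fun X : E => mul one X) (ContinuousLinearMap.id ℝ E) one := by
      have heq : (fun X : E => mul one X) = fun X => X := funext hone_mul
      rw [heq]; exact hasFDerivAt_id one
    have h3 := h1.unique h2
    have h4 : (Dmul.comp (((0 : E →L[ℝ] E)).prod
        (ContinuousLinearMap.id ℝ E))) W = (ContinuousLinearMap.id ℝ E) W := by rw [h3]
    simpa using h4
  -- derivative of inv at one is -id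
  set Dinv := fderiv ℝ inv one with hDinvDef
  have hinvF : HasFDerivAt inv Dinv one := (hinvd one).hasFDerivAt
  have hDinv : ∀ W : E, Dinv W = -W := by
    intro W
    have hprod : HasFDerivAt (fun X : E => (X, inv X))
        ((ContinuousLinearMap.id ℝ E).prod Dinv) one := HasFDerivAt.prodMk (hasFDerivAt_id one) hinvF
    have hmulF' : HasFDerivAt (fun p : E × E => mul p.1 p.2) Dmul (one, inv one) := by
      rw [hinv_one]; exact hmulF
    have h1 := hmulF'.comp one hprod
    have h2 : HasFDerivAt (fun X : E => mul X (inv X)) (0 : E →L[ℝ] E) one := by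
      have heq : (fun X : E => mul X (inv X)) = fun _ => one := funext hmul_inv
      rw [heq]; exact hasFDerivAt_const one one
    have h3 := h1.unique h2
    have h4 : Dmul (W, Dinv W) = 0 := by
      have : (Dmul.comp ((ContinuousLinearMap.id ℝ E).prod Dinv)) W = 0 := by rw [h3]; rfl
      exact this
    have h5 : Dmul (W, Dinv W) = W + Dinv W := by
      have : (W, Dinv W) = (W, (0 : E)) + ((0 : E), Dinv W) := by simp
      rw [this, map_add, hfst, hsnd]
    have h6 : W + Dinv W = 0 := by rw [← h5]; exact h4
    exact eq_neg_of_add_eq_zero_right h6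
  -- main computation
  have heξ : (fun X' => e X' ξ) = fun X' => φ (inv X') ξ := funext fun X => he X ξ
  have heX : (fun ξ' => e Xhat ξ') = fun ξ' => φ (inv Xhat) ξ' := funext fun ξ' => he Xhat ξ'
  set A : E → F := fun X' => φ (inv X') ξ with hAdef
  set B : F → F := fun ξ' => φ (inv Xhat) ξ' with hBdef
  have hAd : Differentiable ℝ A := hφd.comp (hinvd.prodMk (differentiable_const ξ))
  have hBd : Differentiable ℝ B := hφd.comp ((differentiable_const (inv Xhat)).prodMk differentiable_id)
  have hφξd : Differentiable ℝ (fun X => φ X ξ) :=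
    hφd.comp (differentiable_id.prodMk (differentiable_const ξ))
  have hmulXd : Differentiable ℝ (fun Z => mul Xhat Z) :=
    hmd.comp ((differentiable_const Xhat).prodMk differentiable_id)
  set LA := fderiv ℝ A Xhat with hLAdef
  set LT := fderiv ℝ (fun Z => mul Xhat Z) one with hLTdef
  set K := fderiv ℝ B ξ with hKdef
  set S := fderiv ℝ (fun X => φ X ξ) one with hSdef
  have hLA : HasFDerivAt A LA (mul Xhat one) := by rw [hmul_one]; exact (hAd Xhat).hasFDerivAt
  have hLT : HasFDerivAt (fun Z => mul Xhat Z) LT one := (hmulXd one).hasFDerivAt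
  have hcomp1 : HasFDerivAt (fun Z => A (mul Xhat Z)) (LA.comp LT) one := hLA.comp one hLT
  have hS : HasFDerivAt (fun X => φ X ξ) S (inv one) := by
    rw [hinv_one]; exact (hφξd one).hasFDerivAt
  have hinner : HasFDerivAt (fun Z => φ (inv Z) ξ) (S.comp Dinv) one := hS.comp one hinvF
  have hK : HasFDerivAt B K (φ (inv one) ξ) := by
    rw [hinv_one, hφ_one]; exact (hBd ξ).hasFDerivAt
  have hcomp2 : HasFDerivAt (fun Z => B (φ (inv Z) ξ)) (K.comp (S.comp Dinv)) one :=
    hK.comp one hinner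
  have hfuneq : (fun Z => A (mul Xhat Z)) = fun Z => B (φ (inv Z) ξ) := by
    funext Z
    show φ (inv (mul Xhat Z)) ξ = φ (inv Xhat) (φ (inv Z) ξ)
    rw [hinv_mul', hφ_mul]
  have hkey : LA.comp LT = K.comp (S.comp Dinv) := by
    apply HasFDerivAt.unique hcomp1
    rw [hfuneq]; exact hcomp2
  have hkeyU : LA (LT U) = K (S (Dinv U)) := by
    have := congrArg (fun (T : E →L[ℝ] F) => T U) hkey
    simpa using this
  have hfinal : LA (LT U) = -(K (S U)) := by
    rw [hkeyU, hDinv U, map_neg, map_neg]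
  rw [heξ, heX, hleftTrans, hsharp]
  exact hfinal
end

section
/- Let G act on M via a right action φ, and define e(X̂, ξ) := φ(X̂⁻¹, ξ). Let Λ : V → 𝔤 be affine, ξ(t) a solution of ξ̇ = φ♯_{Λ(v(t))}(ξ), and X̂(t) a solution of X̂̇ = X̂·Λ(v(t)) for the same input signal v(t). Then e(X̂(t), ξ(t)) is constant in t. -/
/-!
STATEMENT 7: For a right action φ of G on M, the error e(X̂, ξ) := φ(X̂⁻¹, ξ) is
constant along any pair of trajectories ξ̇ = φ♯_{Λ(v(t))}(ξ), X̂̇ = X̂·Λ(v(t)) driven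
by the same input signal v(t). The Lie group is modelled as a normed vector space
`E` with a smooth group structure; φ♯_U(ξ) := D φ_ξ(I)[U]; X̂·U := D L_{X̂}(I)[U].
-/

theorem fundamental_lift_error_constant
    {V E F : Type*} [NormedAddCommGroup V] [NormedSpace ℝ V] [FiniteDimensional ℝ V]
    [NormedAddCommGroup E] [NormedSpace ℝ E]
    [NormedAddCommGroup F] [NormedSpace ℝ F]
    -- smooth group structure on E (the Lie group G)
    (mul : E → E → E) (one : E) (inv : E → E)
    (hmul_smooth : ContDiff ℝ (⊤ : ℕ∞) (fun p : E × E => mul p.1 p.2))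
    (hinv_smooth : ContDiff ℝ (⊤ : ℕ∞) inv)
    (hassoc : ∀ X Y Z, mul (mul X Y) Z = mul X (mul Y Z))
    (hone_mul : ∀ X, mul one X = X) (hmul_one : ∀ X, mul X one = X)
    (hinv_mul : ∀ X, mul (inv X) X = one) (hmul_inv : ∀ X, mul X (inv X) = one)
    -- smooth right action φ : G × M → M
    (φ : E → F → F)
    (hφ_smooth : ContDiff ℝ (⊤ : ℕ∞) (fun p : E × F => φ p.1 p.2))
    (hφ_one : ∀ ξ, φ one ξ = ξ)
    (hφ_mul : ∀ X Y ξ, φ Y (φ X ξ) = φ (mul X Y) ξ)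
    -- the affine input map Λ : V → 𝔤 and the input signal v : ℝ → V
    (Λ : V →ᵃ[ℝ] E) (v : ℝ → V)
    -- fundamental vector fields φ♯_U(ξ) = D φ_ξ(I)[U]
    (sharp : E → F → F)
    (hsharp : ∀ U ξ, sharp U ξ = fderiv ℝ (fun X => φ X ξ) one U)
    -- left translation X̂·U = D L_{X̂}(I)[U]
    (leftTrans : E → E → E)
    (hleftTrans : ∀ X U, leftTrans X U = fderiv ℝ (fun Z => mul X Z) one U)
    -- a solution ξ(t) of ξ̇ = φ♯_{Λ(v(t))}(ξ) and a solution X̂(t) of X̂̇ = X̂·Λ(v(t))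
    (ξ : ℝ → F) (Xhat : ℝ → E)
    (hξ : ∀ t, HasDerivAt ξ (sharp (Λ (v t)) (ξ t)) t)
    (hXhat : ∀ t, HasDerivAt Xhat (leftTrans (Xhat t) (Λ (v t))) t) :
    -- e(X̂(t), ξ(t)) = φ(X̂(t)⁻¹, ξ(t)) is constant in t
    ∀ t s : ℝ, φ (inv (Xhat t)) (ξ t) = φ (inv (Xhat s)) (ξ s) := by
  -- group identity: Z * (X*Z)⁻¹ = X⁻¹
  have key_grp : ∀ X Z : E, mul Z (inv (mul X Z)) = inv X := by
    intro X Z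
    have h1 : mul (inv X) (mul (mul X Z) (inv (mul X Z))) = inv X := by
      rw [hmul_inv, hmul_one]
    calc mul Z (inv (mul X Z))
        = mul (mul (inv X) (mul X Z)) (inv (mul X Z)) := by
          rw [← hassoc, hinv_mul, hone_mul]
      _ = inv X := by rw [hassoc, h1]
  -- H : E × F → F, H (X, m) = φ (inv X) m, is smooth
  set H : E × F → F := fun p => φ (inv p.1) p.2 with hH_def
  have hH_smooth : ContDiff ℝ (⊤ : ℕ∞) H := by
    have : H = (fun p : E × F => φ p.1 p.2) ∘ (fun p : E × F => (inv p.1, p.2)) := rfl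
    rw [this]
    exact hφ_smooth.comp ((hinv_smooth.comp contDiff_fst).prodMk contDiff_snd)
  -- the error function
  set f : ℝ → F := fun t => H (Xhat t, ξ t) with hf_def
  have hf' : ∀ t, HasDerivAt f 0 t := by
    intro t
    set X := Xhat t
    set ξ0 := ξ t
    set U := Λ (v t)
    -- maps a Z = mul X Z and b Z = φ Z ξ0
    have ha_smooth : ContDiff ℝ (⊤ : ℕ∞) (fun Z : E => mul X Z) :=
      hmul_smooth.comp (contDiff_const.prodMk contDiff_id)
    have hb_smooth : ContDiff ℝ (⊤ : ℕ∞) (fun Z : E => φ Z ξ0) :=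
      hφ_smooth.comp (contDiff_id.prodMk contDiff_const)
    set A := fderiv ℝ (fun Z : E => mul X Z) one with hA
    set B := fderiv ℝ (fun Z : E => φ Z ξ0) one with hB
    have haD : HasFDerivAt (fun Z : E => mul X Z) A one :=
      (ha_smooth.differentiable (by simp) one).hasFDerivAt
    have hbD : HasFDerivAt (fun Z : E => φ Z ξ0) B one :=
      (hb_smooth.differentiable (by simp) one).hasFDerivAt
    have hk : HasFDerivAt (fun Z : E => (mul X Z, φ Z ξ0)) (A.prod B) one := haD.prodMk hbD
    set DH := fderiv ℝ H (X, ξ0) with hDH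
    have hHD : HasFDerivAt H DH (X, ξ0) := (hH_smooth.differentiable (by simp) _).hasFDerivAt
    have hHDk : HasFDerivAt H DH (mul X one, φ one ξ0) := by
      rwa [hmul_one, hφ_one]
    -- composite is constant
    have hconst : (fun Z : E => H (mul X Z, φ Z ξ0)) = fun _ => φ (inv X) ξ0 := by
      funext Z
      show φ (inv (mul X Z)) (φ Z ξ0) = φ (inv X) ξ0
      rw [hφ_mul, key_grp]
    have hcomp : HasFDerivAt (fun Z : E => H (mul X Z, φ Z ξ0))
        (DH.comp (A.prod B)) one := by have := hHDk.comp one hk; exact this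
    have hzero : DH.comp (A.prod B) = (0 : E →L[ℝ] F) := by
      have h0 : HasFDerivAt (fun Z : E => H (mul X Z, φ Z ξ0)) (0 : E →L[ℝ] F) one := by
        rw [hconst]; exact hasFDerivAt_const _ _
      exact hcomp.unique h0
    have hzeroU : DH (A U, B U) = 0 := by
      have := congrArg (fun L : E →L[ℝ] F => L U) hzero
      simpa using this
    -- derivative of the curve
    have hcurve : HasDerivAt (fun t => (Xhat t, ξ t))
        (leftTrans X U, sharp U ξ0) t := (hXhat t).prodMk (hξ t)
    have hfd : HasDerivAt f (DH (leftTrans X U, sharp U ξ0)) t :=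
      by have := hHD.comp_hasDerivAt t hcurve; exact this
    have heq : DH (leftTrans X U, sharp U ξ0) = 0 := by
      rw [hleftTrans, hsharp, ← hA, ← hB] at *
      exact hzeroU
    rwa [heq] at hfd
  have hconstf : ∀ t s : ℝ, f t = f s := fun t s =>
    is_const_of_deriv_eq_zero (fun x => (hf' x).differentiableAt)
      (fun x => (hf' x).deriv) t s
  intro t s
  exact hconstf t s
end

section
/- Let G = (ℝ³ × SO(3)) ⋉ ℝ³ with product (z₁,Q₁,x₁)·(z₂,Q₂,x₂) = (z₁+z₂, Q₁Q₂, x₁ + Q₁x₂ + (I−Q₁)z₂), and define φ : G × (SO(3) × ℝ³) → SO(3) × ℝ³ by φ((z,Q,x), (R,v)) := (RQ, v + Rx + (I−R)z). Then φ is a right group action: φ(g₂, φ(g₁, ξ)) = φ(g₁·g₂, ξ) and φ(identity, ξ) = ξ. -/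
/-!
STATEMENT 18: For G = (ℝ³ × SO(3)) ⋉ ℝ³ with product
(z₁,Q₁,x₁)·(z₂,Q₂,x₂) = (z₁+z₂, Q₁Q₂, x₁+Q₁x₂+(I−Q₁)z₂), the map
φ((z,Q,x), (R,v)) = (RQ, v + Rx + (I−R)z) is a right group action of G on
SO(3) × ℝ³: φ(g₂, φ(g₁, ξ)) = φ(g₁·g₂, ξ) and φ(identity, ξ) = ξ.
-/

open Matrix

/-- The SO(3) predicate: Q is a rotation matrix. -/
def IsSO3 (Q : Matrix (Fin 3) (Fin 3) ℝ) : Prop := Qᵀ * Q = 1 ∧ Q.det = 1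

/-- Elements of G = (ℝ³ × SO(3)) ⋉ ℝ³ as triples (z, Q, x). -/
abbrev VAAGroupElt := (Fin 3 → ℝ) × Matrix (Fin 3) (Fin 3) ℝ × (Fin 3 → ℝ)

/-- The product on G. -/
def vaaMul (g₁ g₂ : VAAGroupElt) : VAAGroupElt :=
  (g₁.1 + g₂.1, g₁.2.1 * g₂.2.1,
   g₁.2.2 + g₁.2.1 *ᵥ g₂.2.2 + (1 - g₁.2.1) *ᵥ g₂.1)

/-- The identity of G. -/
def vaaOne : VAAGroupElt := (0, 1, 0)

/-- The state space SO(3) × ℝ³ of orientation and velocity. -/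
abbrev VAAState := Matrix (Fin 3) (Fin 3) ℝ × (Fin 3 → ℝ)

/-- The action φ((z,Q,x), (R,v)) = (RQ, v + Rx + (I−R)z) of G on SO(3) × ℝ³. -/
def vaaAction (g : VAAGroupElt) (ξ : VAAState) : VAAState :=
  (ξ.1 * g.2.1, ξ.2 + ξ.1 *ᵥ g.2.2 + (1 - ξ.1) *ᵥ g.1)

theorem Matrix.one_sub_mul_mulVec {n R : Type*} [Fintype n] [DecidableEq n] [Ring R]
    (A B : Matrix n n R) (z : n → R) :
    (1 - A * B) *ᵥ z = (1 - A) *ᵥ z + A *ᵥ ((1 - B) *ᵥ z) := by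
  rw [mulVec_mulVec, ← add_mulVec]
  congr 1
  noncomm_ring

/- The velocity terms match because `1 - R Q₁ = (1 - R) + R (1 - Q₁)`: this is where the
`(I - Q₁) z₂` term of the product comes from. -/
theorem vaaAction_vaaAction (g₁ g₂ : VAAGroupElt) (ξ : VAAState) :
    vaaAction g₂ (vaaAction g₁ ξ) = vaaAction (vaaMul g₁ g₂) ξ := by
  simp only [vaaAction, vaaMul, Prod.mk.injEq, Matrix.mul_assoc, Matrix.one_sub_mul_mulVec,
    mulVec_add, mulVec_mulVec, true_and]
  abel

theorem vaaAction_vaaOne (ξ : VAAState) : vaaAction vaaOne ξ = ξ := by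
  simp [vaaAction, vaaOne]

theorem vaa_right_action_general
    (g₁ g₂ : VAAGroupElt) (ξ : VAAState) :
    vaaAction g₂ (vaaAction g₁ ξ) = vaaAction (vaaMul g₁ g₂) ξ ∧
    vaaAction vaaOne ξ = ξ :=
  ⟨vaaAction_vaaAction g₁ g₂ ξ, vaaAction_vaaOne ξ⟩

theorem vaa_right_action
    (g₁ g₂ : VAAGroupElt) (ξ : VAAState)
    (hg₁ : IsSO3 g₁.2.1) (hg₂ : IsSO3 g₂.2.1) (hξ : IsSO3 ξ.1) :
    vaaAction g₂ (vaaAction g₁ ξ) = vaaAction (vaaMul g₁ g₂) ξ ∧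
    vaaAction vaaOne ξ = ξ :=
  vaa_right_action_general g₁ g₂ ξ
end

section
/- Consider the velocity-aided attitude system (Ṙ, v̇) = (RΩ×, Ra + g) on SO(3) × ℝ³ and the observer dynamics (ż̂, Q̂̇, x̂̇) = (g, Q̂Ω×, Q̂a + g) on the group G = (ℝ³ × SO(3)) ⋉ ℝ³, both driven by inputs (Ω(t), a(t)) ∈ ℝ³ × ℝ³ and constant gravity vector g ∈ ℝ³. Then the error e(X̂, ξ) := (RQ̂ᵀ, v − RQ̂ᵀx̂ − (I − RQ̂ᵀ)ẑ) is constant along trajectories: both components have zero time derivative. -/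
/-!
Since `Ω×` is skew-symmetric, `d/dt (R Q̂ᵀ) = R Ω× Q̂ᵀ + R (Q̂ Ω×)ᵀ = R Ω× Q̂ᵀ - R Ω× Q̂ᵀ = 0`.
The second error component equals `(v - ẑ) - R Q̂ᵀ (x̂ - ẑ)`; gravity cancels in both
differences, so its derivative is `R a - R Q̂ᵀ Q̂ a = 0` because `Q̂ᵀ Q̂ = I`.
-/

open Matrix

attribute [local instance] Matrix.linftyOpNormedRing Matrix.linftyOpNormedAlgebra

/-- The skew-symmetric matrix `Ω×` of `Ω ∈ ℝ³`. -/
def skewMat (Ω : Fin 3 → ℝ) : Matrix (Fin 3) (Fin 3) ℝ :=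
  !![0, -Ω 2, Ω 1; Ω 2, 0, -Ω 0; -Ω 1, Ω 0, 0]

theorem skewMat_transpose (Ω : Fin 3 → ℝ) : (skewMat Ω)ᵀ = -skewMat Ω := by
  ext i j; fin_cases i <;> fin_cases j <;> simp [skewMat]

section

variable {𝕜 : Type*} [NontriviallyNormedField 𝕜] [CompleteSpace 𝕜]
  {n : Type*} [Fintype n] [DecidableEq n] {t : 𝕜}

theorem HasDerivAt.matrix_transpose {A : 𝕜 → Matrix n n 𝕜} {A' : Matrix n n 𝕜}
    (hA : HasDerivAt A A' t) : HasDerivAt (fun s => (A s)ᵀ) A'ᵀ t :=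
  (transposeLinearEquiv n n 𝕜 𝕜).toLinearMap.toContinuousLinearMap.hasFDerivAt.comp_hasDerivAt t hA

theorem HasDerivAt.matrix_mulVec {A : 𝕜 → Matrix n n 𝕜} {A' : Matrix n n 𝕜}
    {x : 𝕜 → n → 𝕜} {x' : n → 𝕜} (hA : HasDerivAt A A' t) (hx : HasDerivAt x x' t) :
    HasDerivAt (fun s => A s *ᵥ x s) (A t *ᵥ x' + A' *ᵥ x t) t :=
  (mulVecBilin 𝕜 𝕜 : Matrix n n 𝕜 →ₗ[𝕜] (n → 𝕜) →ₗ[𝕜] n → 𝕜).toContinuousBilinearMap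
    |>.hasDerivAt_of_bilinear (fun _ => hA) (fun _ => hx)

theorem HasDerivAt.mul_transpose_of_transpose_eq_neg {R Q : 𝕜 → Matrix n n 𝕜}
    {S : Matrix n n 𝕜} (hS : Sᵀ = -S) (hR : HasDerivAt R (R t * S) t)
    (hQ : HasDerivAt Q (Q t * S) t) : HasDerivAt (fun s => R s * (Q s)ᵀ) 0 t := by
  have hsum : R t * S * (Q t)ᵀ + R t * (Q t * S)ᵀ = 0 := by
    rw [transpose_mul, hS, neg_mul, mul_neg, ← mul_assoc, add_neg_cancel]
  exact hsum ▸ hR.mul hQ.matrix_transpose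

end

theorem vaa_synchrony_general
    -- inputs: angular velocity Ω(t), specific acceleration a(t), gravity g
    (Ω a : ℝ → Fin 3 → ℝ) (g : Fin 3 → ℝ)
    -- system state (R(t), v(t)) ∈ SO(3) × ℝ³
    (R : ℝ → Matrix (Fin 3) (Fin 3) ℝ) (v : ℝ → Fin 3 → ℝ)
    (hR : ∀ t, HasDerivAt R (R t * skewMat (Ω t)) t)
    (hv : ∀ t, HasDerivAt v (R t *ᵥ a t + g) t)
    -- observer state X̂(t) = (ẑ(t), Q̂(t), x̂(t)) ∈ (ℝ³ × SO(3)) ⋉ ℝ³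
    (zhat : ℝ → Fin 3 → ℝ) (Qhat : ℝ → Matrix (Fin 3) (Fin 3) ℝ)
    (xhat : ℝ → Fin 3 → ℝ)
    (hQhat_SO3 : ∀ t, (Qhat t)ᵀ * Qhat t = 1 ∧ (Qhat t).det = 1)
    (hzhat : ∀ t, HasDerivAt zhat g t)
    (hQhat : ∀ t, HasDerivAt Qhat (Qhat t * skewMat (Ω t)) t)
    (hxhat : ∀ t, HasDerivAt xhat (Qhat t *ᵥ a t + g) t) :
    -- both components of the error e = (RQ̂ᵀ, v − RQ̂ᵀx̂ − (I − RQ̂ᵀ)ẑ) are constant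
    ∀ t : ℝ,
      HasDerivAt (fun s => R s * (Qhat s)ᵀ) 0 t ∧
      HasDerivAt (fun s =>
        v s - (R s * (Qhat s)ᵀ) *ᵥ xhat s - (1 - R s * (Qhat s)ᵀ) *ᵥ zhat s) 0 t := by
  intro t
  have hE :=
    HasDerivAt.mul_transpose_of_transpose_eq_neg (skewMat_transpose (Ω t)) (hR t) (hQhat t)
  refine ⟨hE, ?_⟩
  have hsplit : ∀ s, v s - (R s * (Qhat s)ᵀ) *ᵥ xhat s - (1 - R s * (Qhat s)ᵀ) *ᵥ zhat s
      = (v s - zhat s) - (R s * (Qhat s)ᵀ) *ᵥ (xhat s - zhat s) := fun s => by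
    rw [sub_mulVec, one_mulVec, mulVec_sub]; abel
  have hrot : R t * (Qhat t)ᵀ * Qhat t = R t := by
    rw [mul_assoc, (hQhat_SO3 t).1, mul_one]
  have h := ((hv t).sub (hzhat t)).sub (hE.matrix_mulVec ((hxhat t).sub (hzhat t)))
  rw [add_sub_cancel_right, add_sub_cancel_right, zero_mulVec, add_zero, mulVec_mulVec, hrot,
    sub_self] at h
  rw [funext hsplit]
  exact h

theorem vaa_synchrony
    -- inputs: angular velocity Ω(t), specific acceleration a(t), gravity g
    (Ω a : ℝ → Fin 3 → ℝ) (g : Fin 3 → ℝ)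
    -- system state (R(t), v(t)) ∈ SO(3) × ℝ³
    (R : ℝ → Matrix (Fin 3) (Fin 3) ℝ) (v : ℝ → Fin 3 → ℝ)
    (hR_SO3 : ∀ t, (R t)ᵀ * R t = 1 ∧ (R t).det = 1)
    (hR : ∀ t, HasDerivAt R (R t * skewMat (Ω t)) t)
    (hv : ∀ t, HasDerivAt v (R t *ᵥ a t + g) t)
    -- observer state X̂(t) = (ẑ(t), Q̂(t), x̂(t)) ∈ (ℝ³ × SO(3)) ⋉ ℝ³
    (zhat : ℝ → Fin 3 → ℝ) (Qhat : ℝ → Matrix (Fin 3) (Fin 3) ℝ)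
    (xhat : ℝ → Fin 3 → ℝ)
    (hQhat_SO3 : ∀ t, (Qhat t)ᵀ * Qhat t = 1 ∧ (Qhat t).det = 1)
    (hzhat : ∀ t, HasDerivAt zhat g t)
    (hQhat : ∀ t, HasDerivAt Qhat (Qhat t * skewMat (Ω t)) t)
    (hxhat : ∀ t, HasDerivAt xhat (Qhat t *ᵥ a t + g) t) :
    -- both components of the error e = (RQ̂ᵀ, v − RQ̂ᵀx̂ − (I − RQ̂ᵀ)ẑ) are constant
    ∀ t : ℝ,
      HasDerivAt (fun s => R s * (Qhat s)ᵀ) 0 t ∧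
      HasDerivAt (fun s =>
        v s - (R s * (Qhat s)ᵀ) *ᵥ xhat s - (1 - R s * (Qhat s)ᵀ) *ᵥ zhat s) 0 t :=
  vaa_synchrony_general Ω a g R v hR hv zhat Qhat xhat hQhat_SO3 hzhat hQhat hxhat
end
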